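/- Let G and H ⊴̃ G (H commensurated in G) be finitely generated groups. Then the following are equivalent: (1) H contains a finite index subgroup that is normal in G; (2) H is commensurable to a normal subgroup of G; (3) H is commensurable to a subgroup that is normal in some finite index subgroup of G. -/

import Mathlib

open Subgroup Pointwise

section Aux

variable {G : Type*} [Group G]

private lemma mem_conj' {N : Subgroup G} {g x : G} :
    x ∈ Subgroup.map (MulAut.conj g).toMonoidHom N ↔ g⁻¹ * x * g ∈ N := by
  simp only [Subgroup.mem_map, MulEquiv.coe_toMonoidHom, MulAut.conj_apply]
  constructor
  · rintro ⟨n, hn, rfl⟩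
    have : g⁻¹ * (g * n * g⁻¹) * g = n := by group
    rwa [this]
  · intro h
    exact ⟨g⁻¹ * x * g, h, by group⟩

private lemma conj_smul_eq' (g : G) (A : Subgroup G) :
    Subgroup.map (MulAut.conj g).toMonoidHom A = ConjAct.toConjAct g • A := by
  ext x
  rw [mem_conj', Subgroup.mem_pointwise_smul_iff_inv_smul_mem]
  simp [ConjAct.smul_def, mul_assoc]

private lemma comm_conj' {A B : Subgroup G} (h : Commensurable A B) (g : G) :
    Commensurable (Subgroup.map (MulAut.conj g).toMonoidHom A)
      (Subgroup.map (MulAut.conj g).toMonoidHom B) := by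
  rw [conj_smul_eq', conj_smul_eq']
  exact (Commensurable.commensurable_conj (ConjAct.toConjAct g)).mp h

private lemma relindex_ne_zero_of_le_right' {H K L : Subgroup G}
    (hKL : K ≤ L) (hHL : H.relIndex L ≠ 0) : H.relIndex K ≠ 0 := by
  haveI : Finite (L ⧸ H.subgroupOf L) := Nat.finite_of_card_ne_zero hHL
  haveI : Finite (K ⧸ H.subgroupOf K) :=
    Finite.of_injective _ (Subgroup.quotientSubgroupOfEmbeddingOfLE H hKL).injective
  exact Subgroup.index_ne_zero_of_finite

private lemma fg_of_mulEquiv' {A B : Type*} [Group A] [Group B] (e : A ≃* B)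
    (h : Group.FG A) : Group.FG B := by
  haveI := h
  exact Group.fg_of_surjective (f := e.toMonoidHom) e.surjective

/-- A group with a finitely generated subgroup of finite index is finitely generated. -/
private lemma fg_of_subgroup_fg_finiteIndex' {Q : Type*} [Group Q] {P : Subgroup Q}
    (hP : Group.FG ↥P) (hidx : P.index ≠ 0) : Group.FG Q := by
  classical
  obtain ⟨S, hS, hSfin⟩ := (Subgroup.fg_iff P).mp ((Group.fg_iff_subgroup_fg P).mp hP)
  haveI : Finite (Q ⧸ P) := Nat.finite_of_card_ne_zero hidx
  refine Group.fg_iff.mpr ⟨S ∪ Set.range (Quotient.out : Q ⧸ P → Q), ?_,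
    hSfin.union (Set.finite_range _)⟩
  rw [eq_top_iff]
  intro q _
  have h1 : ((QuotientGroup.mk q : Q ⧸ P).out)⁻¹ * q ∈ P :=
    QuotientGroup.eq.mp (QuotientGroup.out_eq' (QuotientGroup.mk q))
  have h2 : (QuotientGroup.mk q : Q ⧸ P).out ∈
      Subgroup.closure (S ∪ Set.range (Quotient.out : Q ⧸ P → Q)) :=
    Subgroup.subset_closure (Or.inr ⟨_, rfl⟩)
  have h3 : ((QuotientGroup.mk q : Q ⧸ P).out)⁻¹ * q ∈
      Subgroup.closure (S ∪ Set.range (Quotient.out : Q ⧸ P → Q)) := by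
    have hle : P ≤ Subgroup.closure (S ∪ Set.range (Quotient.out : Q ⧸ P → Q)) :=
      hS ▸ Subgroup.closure_mono Set.subset_union_left
    exact hle h1
  have := mul_mem h2 h3
  simpa using this

private def permCongrHom' {α β : Type*} (e : α ≃ β) : Equiv.Perm α →* Equiv.Perm β where
  toFun p := (e.symm.trans p).trans e
  map_one' := by ext x; simp
  map_mul' p q := by ext x; simp [Equiv.Perm.mul_apply]

private lemma monoidHom_finite' {Q P : Type*} [Group Q] [Group P] (hQ : Group.FG Q)
    [Finite P] : Finite (Q →* P) := by
  obtain ⟨S, hS⟩ := hQ.out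
  have hinj : Function.Injective (fun (f : Q →* P) (s : (S : Set Q)) => f s) := by
    intro f g hfg
    refine MonoidHom.eq_of_eqOn_dense hS ?_
    intro x hx
    exact congrFun hfg ⟨x, hx⟩
  exact Finite.of_injective _ hinj

/-- A finitely generated group has finitely many subgroups of a given finite index. -/
private lemma finite_index_eq' {Q : Type*} [Group Q] (hQ : Group.FG Q) {n : ℕ} (hn : n ≠ 0) :
    {K : Subgroup Q | K.index = n}.Finite := by
  classical
  haveI : NeZero n := ⟨hn⟩
  haveI : Finite (Q →* Equiv.Perm (Fin n)) := monoidHom_finite' hQ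
  have key : ∀ K : Subgroup Q, K.index = n →
      ∃ f : Q →* Equiv.Perm (Fin n), ∀ q : Q, q ∈ K ↔ f q 0 = 0 := by
    intro K hK
    have hcard : Nat.card (Q ⧸ K) = n := hK
    haveI : Finite (Q ⧸ K) := Nat.finite_of_card_ne_zero (by rw [hcard]; exact hn)
    let e0 : Q ⧸ K ≃ Fin n :=
      (Nat.equivFinOfCardPos (by rw [hcard]; exact hn)).trans (finCongr hcard)
    let e : Q ⧸ K ≃ Fin n := e0.trans (Equiv.swap (e0 (QuotientGroup.mk 1)) 0)
    have he1 : e (QuotientGroup.mk 1) = 0 := by simp [e]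
    refine ⟨(permCongrHom' e).comp (MulAction.toPermHom Q (Q ⧸ K)), ?_⟩
    intro q
    have happ : ((permCongrHom' e).comp (MulAction.toPermHom Q (Q ⧸ K))) q 0 =
        e (q • e.symm 0) := rfl
    have hes : e.symm 0 = QuotientGroup.mk 1 := by
      rw [← he1, Equiv.symm_apply_apply]
    rw [happ, hes]
    have hsm : q • (QuotientGroup.mk 1 : Q ⧸ K) = QuotientGroup.mk q := by
      show QuotientGroup.mk (q * 1) = QuotientGroup.mk q
      rw [mul_one]
    rw [hsm, ← he1]
    constructor
    · intro hq
      have : (QuotientGroup.mk q : Q ⧸ K) = QuotientGroup.mk 1 :=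
        QuotientGroup.eq.mpr (by simpa using inv_mem hq)
      rw [this]
    · intro hq
      have : (QuotientGroup.mk q : Q ⧸ K) = QuotientGroup.mk 1 := e.injective hq
      have h3 := QuotientGroup.eq.mp this
      rw [mul_one] at h3
      simpa using inv_mem h3
  choose f hf using key
  have hfin : Finite {K : Subgroup Q // K.index = n} := by
    refine Finite.of_injective (fun K => f K.1 K.2) fun K L h => ?_
    have h2 : f K.1 K.2 = f L.1 L.2 := h
    apply Subtype.ext
    ext q
    rw [hf K.1 K.2 q, hf L.1 L.2 q, h2]
  exact Set.finite_coe_iff.mp hfin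

/-- Direction (3) → (2): replace `N` by the intersection of its (finitely many distinct)
conjugates. -/
private lemma exists_normal_commensurable' {H K N : Subgroup G}
    (hcomm : ∀ g : G, Commensurable (Subgroup.map (MulAut.conj g).toMonoidHom H) H)
    (hK : K.FiniteIndex) (hNK : N ≤ K) (hNnorm : (N.subgroupOf K).Normal)
    (hHN : Commensurable H N) : ∃ M : Subgroup G, M.Normal ∧ Commensurable H M := by
  classical
  haveI := hK
  haveI : Finite (G ⧸ K) := Nat.finite_of_card_ne_zero hK.index_ne_zero
  set cN : G → Subgroup G := fun g => Subgroup.map (MulAut.conj g).toMonoidHom N with hcN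
  have hNorm : ∀ k ∈ K, ∀ y ∈ N, k * y * k⁻¹ ∈ N := by
    intro k hk y hy
    have := hNnorm.conj_mem ⟨y, hNK hy⟩ (by simpa [Subgroup.mem_subgroupOf] using hy) ⟨k, hk⟩
    simpa [Subgroup.mem_subgroupOf] using this
  have hle : ∀ a b : G, (QuotientGroup.mk a : G ⧸ K) = QuotientGroup.mk b → cN a ≤ cN b := by
    intro a b hab x hx
    rw [hcN] at hx ⊢
    rw [mem_conj'] at hx ⊢
    have hk : a⁻¹ * b ∈ K := QuotientGroup.eq.mp hab
    have := hNorm _ (inv_mem hk) _ hx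
    have heq : (a⁻¹ * b)⁻¹ * (a⁻¹ * x * a) * (a⁻¹ * b)⁻¹⁻¹ = b⁻¹ * x * b := by group
    rwa [heq] at this
  set M : Subgroup G := ⨅ q : G ⧸ K, cN q.out with hM
  have hmemM : ∀ x : G, x ∈ M ↔ ∀ g : G, x ∈ cN g := by
    intro x
    rw [hM, Subgroup.mem_iInf]
    constructor
    · intro h g
      exact hle _ g (QuotientGroup.out_eq' (QuotientGroup.mk g)) (h (QuotientGroup.mk g))
    · intro h q
      exact h q.out
  have hMnormal : M.Normal := by
    constructor
    intro x hx g
    rw [hmemM] at hx ⊢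
    intro a
    rw [hcN, mem_conj']
    have := (mem_conj').mp (hx (g⁻¹ * a))
    have heq : (g⁻¹ * a)⁻¹ * x * (g⁻¹ * a) = a⁻¹ * (g * x * g⁻¹) * a := by group
    rwa [heq] at this
  have hconjN : ∀ g : G, Commensurable N (cN g) := fun g =>
    (hHN.symm.trans ((hcomm g).symm)).trans (comm_conj' hHN g)
  have hcN1 : cN 1 = N := by
    ext x
    rw [hcN, mem_conj']
    simp
  have hMN : M ≤ N := by
    have h1 : M ≤ cN ((QuotientGroup.mk 1 : G ⧸ K)).out := iInf_le _ _
    have h2 : cN ((QuotientGroup.mk 1 : G ⧸ K)).out ≤ cN 1 :=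
      hle _ _ (QuotientGroup.out_eq' (QuotientGroup.mk 1))
    rw [hcN1] at h2
    exact h1.trans h2
  have h2 : Commensurable N M := by
    constructor
    · rw [Subgroup.relIndex_eq_one.mpr hMN]
      exact one_ne_zero
    · exact Subgroup.relIndex_iInf_ne_zero fun q => (hconjN q.out).2
  exact ⟨M, hMnormal, hHN.trans h2⟩

/-- Direction (2) → (1): intersect all subgroups of `N` of the relevant index, getting a
characteristic finite-index subgroup of `N`. -/
private lemma exists_normal_le_of_commensurable' {H N : Subgroup G} (hH : Group.FG ↥H)
    (hN : N.Normal) (hHN : Commensurable H N) :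
    ∃ N' : Subgroup G, N'.Normal ∧ N' ≤ H ∧ (N'.subgroupOf H).FiniteIndex := by
  classical
  haveI := hN
  haveI := hH
  -- `H ⊓ N` is finitely generated
  haveI hfi : (N.subgroupOf H).FiniteIndex := ⟨hHN.2⟩
  have hfg1 : Group.FG ↥(N.subgroupOf H) := Subgroup.fg_of_index_ne_zero _
  have hfg2 : Group.FG ↥(H ⊓ N) := by
    have : Group.FG ↥((H ⊓ N).subgroupOf H) := by
      rw [Subgroup.inf_subgroupOf_left]; exact hfg1
    exact fg_of_mulEquiv' (Subgroup.subgroupOfEquivOfLe inf_le_left) this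
  -- `N` is finitely generated
  have hPidx : ((H ⊓ N).subgroupOf N).index ≠ 0 := by
    have : (H ⊓ N).relIndex N ≠ 0 := by
      rw [Subgroup.inf_relIndex_right]; exact hHN.1
    exact this
  have hfgN : Group.FG ↥N := by
    refine fg_of_subgroup_fg_finiteIndex' (P := (H ⊓ N).subgroupOf N) ?_ hPidx
    exact fg_of_mulEquiv' (Subgroup.subgroupOfEquivOfLe inf_le_right).symm hfg2
  set n : ℕ := ((H ⊓ N).subgroupOf N).index with hn
  -- intersection of all subgroups of `N` of index `n`
  haveI : Finite {K : Subgroup ↥N // K.index = n} :=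
    Set.finite_coe_iff.mpr (finite_index_eq' hfgN hPidx)
  set D : Subgroup ↥N := ⨅ K : {K : Subgroup ↥N // K.index = n}, (K : Subgroup ↥N) with hD
  have hDidx : D.index ≠ 0 :=
    Subgroup.index_iInf_ne_zero fun K => by rw [K.2]; exact hPidx
  have hDP : D ≤ (H ⊓ N).subgroupOf N := iInf_le _ (⟨_, rfl⟩ : {K : Subgroup ↥N // K.index = n})
  -- `D` is invariant under all automorphisms of `N`
  have hDinv : ∀ (φ : ↥N ≃* ↥N) (d : ↥N), d ∈ D → φ d ∈ D := by
    intro φ d hd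
    rw [hD, Subgroup.mem_iInf]
    rintro ⟨K, hK⟩
    have hK' : (K.comap φ.toMonoidHom).index = n :=
      (K.index_comap_of_surjective φ.surjective).trans hK
    exact (Subgroup.mem_iInf.mp hd ⟨_, hK'⟩ : d ∈ K.comap φ.toMonoidHom)
  refine ⟨D.map N.subtype, ?_, ?_, ?_⟩
  · constructor
    intro x hx g
    obtain ⟨d, hd, rfl⟩ := hx
    refine ⟨MulAut.conjNormal g d, hDinv (MulAut.conjNormal g) d hd, ?_⟩
    simp [MulAut.conjNormal_apply]
  · have h1 : D.map N.subtype ≤ ((H ⊓ N).subgroupOf N).map N.subtype := Subgroup.map_mono hDP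
    rw [Subgroup.subgroupOf_map_subtype] at h1
    exact h1.trans (inf_le_left.trans inf_le_left)
  · have hsub : (D.map N.subtype).subgroupOf N = D :=
      Subgroup.comap_map_eq_self_of_injective N.subtype_injective D
    have hrel1 : (D.map N.subtype).relIndex N ≠ 0 := by
      show ((D.map N.subtype).subgroupOf N).index ≠ 0
      rw [hsub]; exact hDidx
    have hrel2 : (D.map N.subtype).relIndex (H ⊓ N) ≠ 0 :=
      relindex_ne_zero_of_le_right' inf_le_right hrel1
    have hrel3 : (H ⊓ N).relIndex H ≠ 0 := by
      rw [inf_comm, Subgroup.inf_relIndex_right]; exact hHN.2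
    have hle1 : D.map N.subtype ≤ H ⊓ N := by
      have h1 : D.map N.subtype ≤ ((H ⊓ N).subgroupOf N).map N.subtype := Subgroup.map_mono hDP
      rw [Subgroup.subgroupOf_map_subtype] at h1
      exact h1.trans inf_le_left
    have : (D.map N.subtype).relIndex H ≠ 0 := by
      rw [← Subgroup.relIndex_mul_relIndex (D.map N.subtype) (H ⊓ N) H hle1 inf_le_left]
      exact mul_ne_zero hrel2 hrel3
    exact ⟨this⟩

end Aux

theorem commensurated_fg_normal_tfae {G : Type*} [Group G]
    (hG : Group.FG G) (H : Subgroup G) (hH : Group.FG ↥H)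
    (hcomm : ∀ g : G, Commensurable (Subgroup.map (MulAut.conj g).toMonoidHom H) H) :
    List.TFAE
      [ ∃ N : Subgroup G, N.Normal ∧ N ≤ H ∧ (N.subgroupOf H).FiniteIndex,
        ∃ N : Subgroup G, N.Normal ∧ Commensurable H N,
        ∃ K N : Subgroup G, K.FiniteIndex ∧ N ≤ K ∧ (N.subgroupOf K).Normal ∧
          Commensurable H N ] := by
  tfae_have 1 → 2 := by
    rintro ⟨N, hNnorm, hNH, hfin⟩
    refine ⟨N, hNnorm, ?_, hfin.index_ne_zero⟩
    rw [Subgroup.relIndex_eq_one.mpr hNH]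
    exact one_ne_zero
  tfae_have 2 → 3 := by
    rintro ⟨N, hNnorm, hc⟩
    exact ⟨⊤, N, ⟨by simp [Subgroup.index_top]⟩, le_top, hNnorm.subgroupOf ⊤, hc⟩
  tfae_have 3 → 1 := by
    rintro ⟨K, N, hKfin, hNK, hNnorm, hc⟩
    obtain ⟨M, hMnorm, hM⟩ := exists_normal_commensurable' hcomm hKfin hNK hNnorm hc
    exact exists_normal_le_of_commensurable' hH hMnorm hM
  tfae_finish
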